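/- Let Γ be a reflexive locally finite k-separable relation with a k-atom A satisfying |A| ≤ |∇(A)| (Γ is k-faithful). Then any two distinct k-atoms of Γ intersect in fewer than k elements. -/
import Mathlib


variable {V : Type*}

/-- Image of a set under a relation. -/
def GImg (E : V → V → Prop) (X : Set V) : Set V := {y | ∃ x ∈ X, E x y}

/-- Board (boundary) of a set. -/
def GBd (E : V → V → Prop) (X : Set V) : Set V := GImg E X \ X

/-- Exterior of a set. -/
def GExt (E : V → V → Prop) (X : Set V) : Set V := (GImg E X)ᶜ

/-- Reverse relation. -/
def GRev (E : V → V → Prop) : V → V → Prop := fun x y => E y x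

/-- Reflexivity. -/
def GRefl (E : V → V → Prop) : Prop := ∀ x, E x x

/-- Local finiteness. -/
def GLocFin (E : V → V → Prop) : Prop :=
  ∀ x : V, {y | E x y}.Finite ∧ {y | E y x}.Finite

/-- k-separability. -/
def GSep (E : V → V → Prop) (k : ℕ) : Prop :=
  ∃ X : Set V, X.Finite ∧ k ≤ X.ncard ∧ k ≤ (GExt E X).ncard

/-- The k-th connectivity. -/
noncomputable def GKappa (E : V → V → Prop) (k : ℕ) : ℕ :=
  sInf {n | ∃ X : Set V, X.Finite ∧ k ≤ X.ncard ∧ k ≤ (GExt E X).ncard ∧ (GBd E X).ncard = n}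

/-- k-fragments. -/
def GFrag (E : V → V → Prop) (k : ℕ) (X : Set V) : Prop :=
  X.Finite ∧ k ≤ X.ncard ∧ k ≤ (GExt E X).ncard ∧ (GBd E X).ncard = GKappa E k

/-- k-atoms: k-fragments of minimal cardinality. -/
def GAtom (E : V → V → Prop) (k : ℕ) (X : Set V) : Prop :=
  GFrag E k X ∧ ∀ Y : Set V, GFrag E k Y → X.ncard ≤ Y.ncard

/-- k-faithful: every k-atom A satisfies |A| ≤ |∇(A)|. -/
def GFaithful (E : V → V → Prop) (k : ℕ) : Prop :=
  ∀ A : Set V, GAtom E k A → A.ncard ≤ (GExt E A).ncard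

lemma gimg_union (E : V → V → Prop) (X Y : Set V) :
    GImg E (X ∪ Y) = GImg E X ∪ GImg E Y := by
  ext v; simp only [GImg, Set.mem_setOf_eq, Set.mem_union]
  constructor
  · rintro ⟨x, hx | hx, hE⟩
    · exact Or.inl ⟨x, hx, hE⟩
    · exact Or.inr ⟨x, hx, hE⟩
  · rintro (⟨x, hx, hE⟩ | ⟨x, hx, hE⟩)
    · exact ⟨x, Or.inl hx, hE⟩
    · exact ⟨x, Or.inr hx, hE⟩

lemma gimg_inter_subset (E : V → V → Prop) (X Y : Set V) :
    GImg E (X ∩ Y) ⊆ GImg E X ∩ GImg E Y := by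
  rintro v ⟨x, ⟨hx, hy⟩, hE⟩
  exact ⟨⟨x, hx, hE⟩, ⟨x, hy, hE⟩⟩

lemma subset_gimg {E : V → V → Prop} (hrefl : GRefl E) (X : Set V) : X ⊆ GImg E X :=
  fun x hx => ⟨x, hx, hrefl x⟩

lemma gimg_finite {E : V → V → Prop} (hloc : GLocFin E) {X : Set V} (hX : X.Finite) :
    (GImg E X).Finite := by
  have : GImg E X = ⋃ x ∈ X, {y | E x y} := by
    ext v; simp [GImg]
  rw [this]
  exact hX.biUnion (fun x _ => (hloc x).1)

/-- With a reflexive relation, the image covers the set and so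
    `Y`, `GBd E Y`, `GExt E Y` tripartition the universe; counting lemma. -/
lemma tripart [Finite V] {E : V → V → Prop} (hrefl : GRefl E) (S Y : Set V) :
    S.ncard = (S ∩ Y).ncard + (S ∩ GBd E Y).ncard + (S ∩ GExt E Y).ncard := by
  have h1 : S = (S ∩ GImg E Y) ∪ (S ∩ GExt E Y) := by
    rw [GExt, ← Set.inter_union_distrib_left, Set.union_compl_self, Set.inter_univ]
  have h2 : S ∩ GImg E Y = (S ∩ Y) ∪ (S ∩ GBd E Y) := by
    rw [GBd, ← Set.inter_union_distrib_left, Set.union_diff_cancel (subset_gimg hrefl Y)]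
  have d1 : Disjoint (S ∩ GImg E Y) (S ∩ GExt E Y) := by
    apply Set.disjoint_of_subset Set.inter_subset_right Set.inter_subset_right
    exact disjoint_compl_right
  have d2 : Disjoint (S ∩ Y) (S ∩ GBd E Y) := by
    apply Set.disjoint_of_subset Set.inter_subset_right Set.inter_subset_right
    exact Set.disjoint_sdiff_right
  calc S.ncard = (S ∩ GImg E Y).ncard + (S ∩ GExt E Y).ncard := by
        conv_lhs => rw [h1]
        exact Set.ncard_union_eq d1 (Set.toFinite _) (Set.toFinite _)
    _ = (S ∩ Y).ncard + (S ∩ GBd E Y).ncard + (S ∩ GExt E Y).ncard := by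
        rw [h2, Set.ncard_union_eq d2 (Set.toFinite _) (Set.toFinite _)]

/-- Submodularity of the boundary. -/
lemma gbd_submodular [Finite V] (E : V → V → Prop) (X Y : Set V) :
    (GBd E (X ∩ Y)).ncard + (GBd E (X ∪ Y)).ncard ≤ (GBd E X).ncard + (GBd E Y).ncard := by
  set S1 := (GImg E X ∩ GImg E Y) \ (X ∩ Y) with hS1
  set S2 := (GImg E X ∪ GImg E Y) \ (X ∪ Y) with hS2
  have hb1 : GBd E (X ∩ Y) ⊆ S1 :=
    Set.diff_subset_diff_left (gimg_inter_subset E X Y)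
  have hb2 : GBd E (X ∪ Y) = S2 := by rw [GBd, gimg_union]
  have key : S1.ncard + S2.ncard ≤ (GBd E X).ncard + (GBd E Y).ncard := by
    have e1 : (S1 ∪ S2).ncard + (S1 ∩ S2).ncard = S1.ncard + S2.ncard :=
      Set.ncard_union_add_ncard_inter S1 S2 (Set.toFinite _) (Set.toFinite _)
    have e2 : (GBd E X ∪ GBd E Y).ncard + (GBd E X ∩ GBd E Y).ncard
        = (GBd E X).ncard + (GBd E Y).ncard :=
      Set.ncard_union_add_ncard_inter _ _ (Set.toFinite _) (Set.toFinite _)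
    have su : S1 ∪ S2 ⊆ GBd E X ∪ GBd E Y := by
      intro v hv
      simp only [hS1, hS2, GBd, Set.mem_union, Set.mem_diff, Set.mem_inter_iff] at *
      tauto
    have si : S1 ∩ S2 ⊆ GBd E X ∩ GBd E Y := by
      intro v hv
      simp only [hS1, hS2, GBd, Set.mem_union, Set.mem_diff, Set.mem_inter_iff] at *
      tauto
    calc S1.ncard + S2.ncard = (S1 ∪ S2).ncard + (S1 ∩ S2).ncard := e1.symm
      _ ≤ (GBd E X ∪ GBd E Y).ncard + (GBd E X ∩ GBd E Y).ncard :=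
          Nat.add_le_add (Set.ncard_le_ncard su (Set.toFinite _))
            (Set.ncard_le_ncard si (Set.toFinite _))
      _ = (GBd E X).ncard + (GBd E Y).ncard := e2
  calc (GBd E (X ∩ Y)).ncard + (GBd E (X ∪ Y)).ncard
      ≤ S1.ncard + S2.ncard := by
        rw [hb2]
        exact Nat.add_le_add_right (Set.ncard_le_ncard hb1 (Set.toFinite _)) _
    _ ≤ (GBd E X).ncard + (GBd E Y).ncard := key

/-- κ is a lower bound on the boundary of any candidate set. -/
lemma gkappa_le [Finite V] {E : V → V → Prop} {k : ℕ} {Z : Set V}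
    (h1 : k ≤ Z.ncard) (h2 : k ≤ (GExt E Z).ncard) :
    GKappa E k ≤ (GBd E Z).ncard :=
  Nat.sInf_le ⟨Z, Set.toFinite _, h1, h2, rfl⟩

/-- Theorem 4.1(iii): if `X`, `Y` are k-fragments with `|X ∩ Y| ≥ k`
    and `|X| ≤ |∇Y|`, then `X ∩ Y` is a k-fragment. -/
lemma gfrag_inter [Finite V] {E : V → V → Prop} (hrefl : GRefl E) {k : ℕ}
    {X Y : Set V} (hX : GFrag E k X) (hY : GFrag E k Y)
    (hk : k ≤ (X ∩ Y).ncard) (hXY : X.ncard ≤ (GExt E Y).ncard) :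
    GFrag E k (X ∩ Y) := by
  obtain ⟨-, hXk, hXe, hXb⟩ := hX
  obtain ⟨-, hYk, hYe, hYb⟩ := hY
  -- exterior of intersection contains exterior of X
  have hext : GExt E X ⊆ GExt E (X ∩ Y) :=
    Set.compl_subset_compl.mpr (fun v hv => by
      obtain ⟨x, ⟨hx, -⟩, hE⟩ := hv; exact ⟨x, hx, hE⟩)
  have hke : k ≤ (GExt E (X ∩ Y)).ncard :=
    le_trans hXe (Set.ncard_le_ncard hext (Set.toFinite _))
  have hκint : GKappa E k ≤ (GBd E (X ∩ Y)).ncard := gkappa_le hk hke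
  -- the key counting inequality (*)
  have htriX : X.ncard = (X ∩ Y).ncard + (X ∩ GBd E Y).ncard + (X ∩ GExt E Y).ncard :=
    tripart hrefl X Y
  have htriE : (GExt E Y).ncard = (GExt E Y ∩ X).ncard + (GExt E Y ∩ GBd E X).ncard
      + (GExt E Y ∩ GExt E X).ncard := tripart hrefl (GExt E Y) X
  have hcomm1 : (GExt E Y ∩ X).ncard = (X ∩ GExt E Y).ncard := by rw [Set.inter_comm]
  have hstar : (X ∩ Y).ncard + (X ∩ GBd E Y).ncard
      ≤ (GExt E Y ∩ GBd E X).ncard + (GExt E Y ∩ GExt E X).ncard := by omega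
  -- T := common exterior
  set T := GExt E X ∩ GExt E Y with hT
  have hText : GExt E (X ∪ Y) = T := by
    rw [GExt, gimg_union, Set.compl_union]; rfl
  by_cases hTk : k ≤ T.ncard
  · -- X ∪ Y is a candidate, hence submodularity pins down the boundary
    have hkU : k ≤ (X ∪ Y).ncard :=
      le_trans hXk (Set.ncard_le_ncard Set.subset_union_left (Set.toFinite _))
    have hκun : GKappa E k ≤ (GBd E (X ∪ Y)).ncard :=
      gkappa_le hkU (hText ▸ hTk)
    have hsub := gbd_submodular E X Y
    refine ⟨Set.toFinite _, hk, hke, ?_⟩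
    omega
  · -- impossible case: |T| < k ≤ |X ∩ Y|
    exfalso
    -- |∂(X∩Y)| ≤ |X∩∂Y| + |∂X∩Y| + |∂X∩∂Y|
    have hbsub : GBd E (X ∩ Y) ⊆ (X ∩ GBd E Y) ∪ ((GBd E X ∩ Y) ∪ (GBd E X ∩ GBd E Y)) := by
      intro v hv
      obtain ⟨hvi, hvn⟩ := hv
      have hvX : v ∈ GImg E X := (gimg_inter_subset E X Y hvi).1
      have hvY : v ∈ GImg E Y := (gimg_inter_subset E X Y hvi).2
      simp only [GBd, Set.mem_union, Set.mem_inter_iff, Set.mem_diff, Set.mem_inter_iff] at *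
      by_cases hx : v ∈ X <;> by_cases hy : v ∈ Y <;> tauto
    have hble : (GBd E (X ∩ Y)).ncard ≤ (X ∩ GBd E Y).ncard + ((GBd E X ∩ Y).ncard
        + (GBd E X ∩ GBd E Y).ncard) :=
      le_trans (Set.ncard_le_ncard hbsub (Set.toFinite _))
        (le_trans (Set.ncard_union_le _ _) (Nat.add_le_add_left (Set.ncard_union_le _ _) _))
    have htriB : (GBd E X).ncard = (GBd E X ∩ Y).ncard + (GBd E X ∩ GBd E Y).ncard
        + (GBd E X ∩ GExt E Y).ncard := tripart hrefl (GBd E X) Y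
    have hcomm2 : (GExt E Y ∩ GBd E X).ncard = (GBd E X ∩ GExt E Y).ncard := by
      rw [Set.inter_comm]
    have hcomm3 : (GExt E Y ∩ GExt E X).ncard = T.ncard := by rw [hT, Set.inter_comm]
    omega

theorem stmt15 {V : Type*} (E : V → V → Prop) (hrefl : GRefl E) (hloc : GLocFin E)
    (k : ℕ) (hk : 1 ≤ k) (hsep : GSep E k) (hfaith : GFaithful E k)
    (A B : Set V) (hA : GAtom E k A) (hB : GAtom E k B) (hne : A ≠ B) :
    (A ∩ B).ncard < k := by
  -- V is finite: A is finite, so GImg E A is finite; GExt E A is finite since its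
  -- ncard is ≥ k ≥ 1
  have hAfin : A.Finite := hA.1.1
  have hImgFin : (GImg E A).Finite := gimg_finite hloc hAfin
  have hExtFin : (GExt E A).Finite := by
    by_contra h
    have := Set.Infinite.ncard (fun hf => h hf)
    have := hA.1.2.2.1
    omega
  have hVfin : Finite V := by
    rw [← Set.finite_univ_iff]
    have : (Set.univ : Set V) = GImg E A ∪ GExt E A := by
      rw [GExt, Set.union_compl_self]
    rw [this]
    exact hImgFin.union hExtFin
  by_contra hcon
  push_neg at hcon
  -- |A| ≤ |∇B| by faithfulness and atom minimality
  have hAB : A.ncard ≤ (GExt E B).ncard :=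
    le_trans (hA.2 B hB.1) (hfaith B hB)
  have hBA : B.ncard ≤ (GExt E A).ncard :=
    le_trans (hB.2 A hA.1) (hfaith A hA)
  have hfragAB : GFrag E k (A ∩ B) := gfrag_inter hrefl hA.1 hB.1 hcon hAB
  have hABcomm : k ≤ (B ∩ A).ncard := by rw [Set.inter_comm]; exact hcon
  have hfragBA : GFrag E k (B ∩ A) := gfrag_inter hrefl hB.1 hA.1 hABcomm hBA
  have h1 : A ∩ B = A :=
    Set.eq_of_subset_of_ncard_le Set.inter_subset_left (hA.2 _ hfragAB) (Set.toFinite _)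
  have h2 : B ∩ A = B :=
    Set.eq_of_subset_of_ncard_le Set.inter_subset_left (hB.2 _ hfragBA) (Set.toFinite _)
  exact hne (by rw [← h1, Set.inter_comm, h2])
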